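/- arXiv:2310.01537 — 2 statements merged into one kernel-verified Lean document; each statement's English description precedes it below -/
import Mathlib

section
/- For any two permutations p and p′ of {1,…,N} and any measurable set A ⊆ ℱ, the conditional expectations given σ(Y) agree almost surely: E[1{h(Y,X₁,…,X_N) ∈ A} · 1{R = p} | σ(Y)] = E[1{h(Y,X₁,…,X_N) ∈ A} · 1{R = p′} | σ(Y)]. -/
open MeasureTheory ProbabilityTheory
open scoped ENNReal NNReal

/-- The rank vector of a tuple of reals: `rankVec r k = #{j : r j ≤ r k}`.
When the entries are pairwise distinct this is a permutation of `{1, …, N}`. -/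
noncomputable def rankVec {N : ℕ} (r : Fin N → ℝ) : Fin N → ℕ :=
  fun k => (Finset.univ.filter fun j => r j ≤ r k).card

lemma rankVec_comp_perm {N : ℕ} (r : Fin N → ℝ) (q : Equiv.Perm (Fin N)) (k : Fin N) :
    rankVec (fun j => r (q j)) k = rankVec r (q k) := by
  unfold rankVec
  exact Finset.card_equiv q (by simp)

/-- If `(Y, Z)` and `(Y, Z')` have the same law, conditional expectations of
indicator functions of `(Y, Z)` and `(Y, Z')` given `σ(Y)` agree a.s. -/
lemma condexp_indicator_comp_eq_of_map_eq
    {Ω ℰ α : Type*} [MeasurableSpace Ω] [MeasurableSpace ℰ] [MeasurableSpace α]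
    (μ : Measure Ω) [IsProbabilityMeasure μ]
    (Y : Ω → ℰ) (hY : Measurable Y) (Z Z' : Ω → α) (hZ : Measurable Z) (hZ' : Measurable Z')
    (hmap : Measure.map (fun ω => (Y ω, Z ω)) μ = Measure.map (fun ω => (Y ω, Z' ω)) μ)
    (s : Set (ℰ × α)) (hs : MeasurableSet s) :
    μ[(fun ω => s.indicator (fun _ => (1 : ℝ)) (Y ω, Z ω)) |
        MeasurableSpace.comap Y inferInstance]
      =ᵐ[μ]
    μ[(fun ω => s.indicator (fun _ => (1 : ℝ)) (Y ω, Z' ω)) |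
        MeasurableSpace.comap Y inferInstance] := by
  have hmY : MeasurableSpace.comap Y inferInstance ≤ ‹MeasurableSpace Ω› := hY.comap_le
  have hW : Measurable (fun ω => (Y ω, Z ω)) := hY.prodMk hZ
  have hW' : Measurable (fun ω => (Y ω, Z' ω)) := hY.prodMk hZ'
  have hint : ∀ (u : Set (ℰ × α)), MeasurableSet u → ∀ (V : Ω → ℰ × α), Measurable V →
      Integrable (fun ω => u.indicator (fun _ => (1 : ℝ)) (V ω)) μ := by
    intro u hu V hV
    have : (fun ω => u.indicator (fun _ => (1 : ℝ)) (V ω))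
        = (V ⁻¹' u).indicator (fun _ => (1 : ℝ)) := by
      funext ω
      by_cases hω : V ω ∈ u <;> simp [Set.indicator_apply, hω]
    rw [this]
    exact (integrable_const (1 : ℝ)).indicator (hV hu)
  symm
  refine ae_eq_condExp_of_forall_setIntegral_eq hmY (hint s hs _ hW)
    (fun t _ _ => integrable_condExp.integrableOn) (fun t ht hμt => ?_)
    (StronglyMeasurable.aestronglyMeasurable stronglyMeasurable_condExp)
  rw [setIntegral_condExp hmY (hint s hs _ hW') ht]
  obtain ⟨B, hB, rfl⟩ := ht
  have key : ∀ (V : Ω → ℰ × α), Measurable V → (∀ ω, (V ω).1 = Y ω) →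
      ∫ x in Y ⁻¹' B, s.indicator (fun _ => (1 : ℝ)) (V x) ∂μ
        = ∫ z, ((B ×ˢ (Set.univ : Set α)) ∩ s).indicator (fun _ => (1 : ℝ)) z
            ∂(Measure.map V μ) := by
    intro V hV hV1
    rw [← integral_indicator (hY hB)]
    rw [integral_map hV.aemeasurable
      (((stronglyMeasurable_const.indicator
        ((hB.prod MeasurableSet.univ).inter hs))).aestronglyMeasurable)]
    congr 1
    funext ω
    by_cases h1 : Y ω ∈ B <;> by_cases h2 : V ω ∈ s <;>
      simp [Set.indicator_apply, h1, h2, hV1 ω]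
  rw [key _ hW' (fun _ => rfl), key _ hW (fun _ => rfl), hmap]

/-- The joint law of `(Y, (X_{q k})_k)` equals the joint law of `(Y, (X_k)_k)` when the
`X_k` are i.i.d. and independent of `Y`. -/
lemma map_pair_perm_eq {Ω 𝓧 ℰ : Type*} [MeasurableSpace Ω] [MeasurableSpace 𝓧]
    [MeasurableSpace ℰ] (P : Measure Ω) [IsProbabilityMeasure P]
    (N : ℕ) (X : Fin N → Ω → 𝓧) (Y : Ω → ℰ)
    (hY : Measurable Y) (hX : ∀ k, Measurable (X k))
    (hIndep : iIndep (fun i : Option (Fin N) =>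
      i.elim (MeasurableSpace.comap Y inferInstance)
        fun k => MeasurableSpace.comap (X k) inferInstance) P)
    (hId : ∀ j k : Fin N, IdentDistrib (X j) (X k) P P) (q : Equiv.Perm (Fin N)) :
    Measure.map (fun ω => (Y ω, fun k => X (q k) ω)) P
      = Measure.map (fun ω => (Y ω, fun k => X k ω)) P := by
  have hW : Measurable (fun ω => (Y ω, fun k => X k ω)) :=
    hY.prodMk (measurable_pi_lambda _ fun k => hX k)
  have hW' : Measurable (fun ω => (Y ω, fun k => X (q k) ω)) :=
    hY.prodMk (measurable_pi_lambda _ fun k => hX (q k))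
  have key : ∀ (B : Set ℰ) (t : Fin N → Set 𝓧), MeasurableSet B →
      (∀ k, MeasurableSet (t k)) →
      P (Y ⁻¹' B ∩ ⋂ k, X k ⁻¹' t k) = P (Y ⁻¹' B) * ∏ k, P (X k ⁻¹' t k) := by
    intro B t hB ht
    have hmeas : ∀ i : Option (Fin N),
        MeasurableSet[(i.elim (MeasurableSpace.comap Y inferInstance)
          fun k => MeasurableSpace.comap (X k) inferInstance)]
          (i.elim (Y ⁻¹' B) (fun k => X k ⁻¹' t k)) := by
      rintro (_ | k)
      · exact ⟨B, hB, rfl⟩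
      · exact ⟨t k, ht k, rfl⟩
    have h1 := hIndep.meas_iInter hmeas
    have h2 : (⋂ i : Option (Fin N), i.elim (Y ⁻¹' B) (fun k => X k ⁻¹' t k))
        = Y ⁻¹' B ∩ ⋂ k, X k ⁻¹' t k := by
      ext ω; simp [Set.mem_iInter, Option.forall, Set.mem_inter_iff]
    rw [h2] at h1
    rw [h1, Fintype.prod_option]; rfl
  refine ext_of_generate_finite
    (Set.image2 (· ×ˢ ·) { s : Set ℰ | MeasurableSet s }
      (Set.pi Set.univ '' Set.pi Set.univ fun _ : Fin N => { s : Set 𝓧 | MeasurableSet s }))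
    ?_ ?_ ?_ ?_
  · exact (generateFrom_eq_prod MeasurableSpace.generateFrom_measurableSet generateFrom_pi
      isCountablySpanning_measurableSet
      (IsCountablySpanning.pi fun _ => isCountablySpanning_measurableSet)).symm
  · exact MeasurableSpace.isPiSystem_measurableSet.prod isPiSystem_pi
  · rintro _ ⟨B, hB, _, ⟨t, ht, rfl⟩, rfl⟩
    have ht' : ∀ k, MeasurableSet (t k) := fun k => ht k (Set.mem_univ k)
    have hBt : MeasurableSet (B ×ˢ Set.pi Set.univ t) :=
      hB.prod (MeasurableSet.univ_pi ht')
    rw [Measure.map_apply hW' hBt, Measure.map_apply hW hBt]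
    have e1 : (fun ω => (Y ω, fun k => X k ω)) ⁻¹' (B ×ˢ Set.pi Set.univ t)
        = Y ⁻¹' B ∩ ⋂ k, X k ⁻¹' t k := by
      ext ω; simp [Set.mem_pi]
    have e2 : (fun ω => (Y ω, fun k => X (q k) ω)) ⁻¹' (B ×ˢ Set.pi Set.univ t)
        = Y ⁻¹' B ∩ ⋂ k, X k ⁻¹' t (q.symm k) := by
      ext ω
      simp only [Set.mem_preimage, Set.mem_prod, Set.mem_pi, Set.mem_univ, forall_true_left,
        Set.mem_inter_iff, Set.mem_iInter]
      refine and_congr Iff.rfl ⟨fun H k => ?_, fun H k => ?_⟩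
      · simpa using H (q.symm k)
      · simpa using H (q k)
    rw [e1, e2, key B t hB ht', key B (fun k => t (q.symm k)) hB (fun k => ht' _)]
    congr 1
    have e3 : ∀ k, P (X k ⁻¹' t (q.symm k)) = P (X (q.symm k) ⁻¹' t (q.symm k)) :=
      fun k => (hId k (q.symm k)).measure_mem_eq (ht' _)
    rw [Finset.prod_congr rfl fun k _ => e3 k]
    exact Equiv.prod_comp q.symm (fun j => P (X j ⁻¹' t j))
  · simp [Measure.map_apply hW' MeasurableSet.univ, Measure.map_apply hW MeasurableSet.univ]

/-- For any two permutations `p, p'` of `{1,…,N}` and any measurable `A ⊆ 𝓕`,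
`E[1{h(Y,X₁,…,X_N) ∈ A} · 1{R = p} | σ(Y)] = E[1{h(Y,X₁,…,X_N) ∈ A} · 1{R = p'} | σ(Y)]`
almost surely. -/
theorem condexp_indicator_rank_perm_invariant
    {Ω : Type*} [MeasurableSpace Ω] (P : Measure Ω) [IsProbabilityMeasure P]
    {𝓧 ℰ 𝓕 : Type*} [MeasurableSpace 𝓧] [MeasurableSpace ℰ] [MeasurableSpace 𝓕]
    (N : ℕ) (X : Fin N → Ω → 𝓧) (Y : Ω → ℰ)
    (hY : Measurable Y) (hX : ∀ k, Measurable (X k))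
    -- σ(Y), σ(X₁), …, σ(X_N) form an independent family
    (hIndep : iIndep (fun i : Option (Fin N) =>
      i.elim (MeasurableSpace.comap Y inferInstance)
        fun k => MeasurableSpace.comap (X k) inferInstance) P)
    -- X₁, …, X_N are identically distributed
    (hId : ∀ j k : Fin N, IdentDistrib (X j) (X k) P P)
    (g : ℰ → 𝓧 → ℝ) (hg : Measurable (Function.uncurry g))
    -- almost surely the values g(Y,X₁),…,g(Y,X_N) are pairwise distinct
    (hdist : ∀ᵐ ω ∂P, Function.Injective fun k => g (Y ω) (X k ω))
    -- h is measurable and symmetric in its last N arguments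
    (h : ℰ → (Fin N → 𝓧) → 𝓕) (hh : Measurable (Function.uncurry h))
    (hsymm : ∀ (y : ℰ) (x : Fin N → 𝓧) (p : Equiv.Perm (Fin N)),
      h y (fun k => x (p k)) = h y x) :
    ∀ (p p' : Equiv.Perm (Fin N)) (A : Set 𝓕), MeasurableSet A →
      P[fun ω =>
          ({ω | h (Y ω) (fun k => X k ω) ∈ A}.indicator (fun _ => (1 : ℝ)) ω) *
          ({ω | ∀ k, rankVec (fun j => g (Y ω) (X j ω)) k = (p k : ℕ) + 1}.indicator
            (fun _ => (1 : ℝ)) ω)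
        | MeasurableSpace.comap Y inferInstance]
      =ᵐ[P]
      P[fun ω =>
          ({ω | h (Y ω) (fun k => X k ω) ∈ A}.indicator (fun _ => (1 : ℝ)) ω) *
          ({ω | ∀ k, rankVec (fun j => g (Y ω) (X j ω)) k = (p' k : ℕ) + 1}.indicator
            (fun _ => (1 : ℝ)) ω)
        | MeasurableSpace.comap Y inferInstance] := by
  intro p p' A hA
  set q : Equiv.Perm (Fin N) := p'⁻¹ * p with hqdef
  -- the joint set in ℰ × (Fin N → 𝓧)
  set S : Equiv.Perm (Fin N) → Set (ℰ × (Fin N → 𝓧)) := fun pp =>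
    {z | h z.1 z.2 ∈ A ∧ ∀ k, rankVec (fun j => g z.1 (z.2 j)) k = (pp k : ℕ) + 1} with hSdef
  -- measurability of the ingredients
  have hhm : Measurable fun z : ℰ × (Fin N → 𝓧) => h z.1 z.2 := by
    simpa [Function.uncurry_def] using hh
  have hgm : ∀ j, Measurable fun z : ℰ × (Fin N → 𝓧) => g z.1 (z.2 j) := by
    intro j
    have := hg.comp (measurable_fst.prodMk ((measurable_pi_apply j).comp measurable_snd)
      : Measurable fun z : ℰ × (Fin N → 𝓧) => (z.1, z.2 j))
    exact this
  have hrkm : ∀ k, Measurable fun z : ℰ × (Fin N → 𝓧) =>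
      rankVec (fun j => g z.1 (z.2 j)) k := by
    intro k
    have e : (fun z : ℰ × (Fin N → 𝓧) => rankVec (fun j => g z.1 (z.2 j)) k)
        = fun z => ∑ j, if g z.1 (z.2 j) ≤ g z.1 (z.2 k) then 1 else 0 := by
      funext z; unfold rankVec; rw [Finset.card_filter]
    rw [e]
    exact Finset.measurable_sum _ fun j _ =>
      Measurable.ite (measurableSet_le (hgm j) (hgm k)) measurable_const measurable_const
  have hS : ∀ pp : Equiv.Perm (Fin N), MeasurableSet (S pp) := by
    intro pp
    have e : S pp = ((fun z : ℰ × (Fin N → 𝓧) => h z.1 z.2) ⁻¹' A) ∩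
        ⋂ k, (fun z : ℰ × (Fin N → 𝓧) =>
          rankVec (fun j => g z.1 (z.2 j)) k) ⁻¹' {(pp k : ℕ) + 1} := by
      ext z; simp [hSdef, Set.mem_iInter]
    rw [e]
    exact (hhm hA).inter (MeasurableSet.iInter fun k => (hrkm k) (measurableSet_singleton _))
  -- rewrite the integrands as indicators of S composed with (Y, X)
  have hind : ∀ (pp : Equiv.Perm (Fin N)),
      (fun ω =>
        ({ω | h (Y ω) (fun k => X k ω) ∈ A}.indicator (fun _ => (1 : ℝ)) ω) *
        ({ω | ∀ k, rankVec (fun j => g (Y ω) (X j ω)) k = (pp k : ℕ) + 1}.indicator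
          (fun _ => (1 : ℝ)) ω))
      = fun ω => (S pp).indicator (fun _ => (1 : ℝ)) (Y ω, fun k => X k ω) := by
    intro pp
    funext ω
    have hmem : ((Y ω, fun k => X k ω) ∈ S pp) ↔
        ((h (Y ω) fun k => X k ω) ∈ A ∧
          ∀ k, rankVec (fun j => g (Y ω) (X j ω)) k = (pp k : ℕ) + 1) :=
      Iff.rfl
    by_cases h1 : (h (Y ω) fun k => X k ω) ∈ A <;>
      by_cases h2 : ∀ k, rankVec (fun j => g (Y ω) (X j ω)) k = (pp k : ℕ) + 1 <;>
      simp [Set.indicator_apply, hmem, h1, h2]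
  rw [hind p, hind p']
  -- the key pointwise identity relating `p` with the permuted sample and `p'`
  have hpq : ∀ k, (p (q.symm k) : ℕ) = (p' k : ℕ) := by
    intro k
    have e : q.symm k = p.symm (p' k) := rfl
    rw [e, Equiv.apply_symm_apply]
  have hp'q : ∀ k, (p' (q k) : ℕ) = (p k : ℕ) := by
    intro k
    have e : q k = p'.symm (p k) := rfl
    rw [e, Equiv.apply_symm_apply]
  have step2 : (fun ω => (S p).indicator (fun _ => (1 : ℝ)) (Y ω, fun k => X (q k) ω))
      = fun ω => (S p').indicator (fun _ => (1 : ℝ)) (Y ω, fun k => X k ω) := by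
    funext ω
    have hiff : ((Y ω, fun k => X (q k) ω) ∈ S p) ↔ ((Y ω, fun k => X k ω) ∈ S p') := by
      simp only [hSdef, Set.mem_setOf_eq]
      have hh1 : h (Y ω) (fun k => X (q k) ω) = h (Y ω) (fun k => X k ω) :=
        hsymm (Y ω) (fun k => X k ω) q
      refine and_congr (by rw [hh1]) ?_
      have hr : ∀ k, rankVec (fun j => g (Y ω) (X (q j) ω)) k
          = rankVec (fun j => g (Y ω) (X j ω)) (q k) :=
        fun k => rankVec_comp_perm (fun j => g (Y ω) (X j ω)) q k
      constructor
      · intro H k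
        have := H (q.symm k)
        rw [hr (q.symm k), Equiv.apply_symm_apply, hpq] at this
        exact this
      · intro H k
        rw [hr k]
        rw [← hp'q k]
        exact H (q k)
    by_cases hm : (Y ω, fun k => X (q k) ω) ∈ S p
    · rw [Set.indicator_of_mem hm, Set.indicator_of_mem (hiff.mp hm)]
    · rw [Set.indicator_of_notMem hm,
        Set.indicator_of_notMem (fun hc => hm (hiff.mpr hc))]
  have main := condexp_indicator_comp_eq_of_map_eq P Y hY
    (fun ω => fun k => X k ω) (fun ω => fun k => X (q k) ω)
    (measurable_pi_lambda _ fun k => hX k) (measurable_pi_lambda _ fun k => hX (q k))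
    (map_pair_perm_eq P N X Y hY hX hIndep hId q).symm (S p) (hS p)
  rw [step2] at main
  exact main
end

section
/- For every t and every s ≥ 1 with t + s ≤ T, the rank vector R_t is independent of the tuple of subsequent rank vectors (R_{t+1},…,R_{t+s}). -/
open MeasureTheory ProbabilityTheory Matrix
open scoped ENNReal NNReal

/-- The residual `‖Δ − B(BᵀΔ)‖₂` of a vector `Δ ∈ ℝ^p` with respect to the column
space of the `p × q` matrix `B`, in the Euclidean (ℓ²) norm. -/
noncomputable def resid {p q : ℕ} (B : Matrix (Fin p) (Fin q) ℝ)
    (Δ : EuclideanSpace ℝ (Fin p)) : ℝ :=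
  ‖Δ - (WithLp.equiv 2 (Fin p → ℝ)).symm
      (B.mulVec (Bᵀ.mulVec (WithLp.equiv 2 (Fin p → ℝ) Δ)))‖

set_option linter.unusedVariables false
set_option linter.unusedSectionVars false
set_option linter.unusedTactic false

lemma measurable_rankVec {N : ℕ} : Measurable (rankVec (N := N)) := by
  apply measurable_pi_lambda
  intro k
  have : (fun r : Fin N → ℝ => rankVec r k)
      = fun r => ∑ j : Fin N, if r j ≤ r k then 1 else 0 := by
    funext r; rw [rankVec, Finset.card_filter]
  rw [this]
  exact Finset.measurable_sum _ fun j _ =>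
    Measurable.ite (measurableSet_le (measurable_pi_apply j) (measurable_pi_apply k))
      measurable_const measurable_const

lemma rankVec_comp_perm_s9 {N : ℕ} (r : Fin N → ℝ) (σ : Equiv.Perm (Fin N)) :
    rankVec (r ∘ σ) = rankVec r ∘ σ := by
  funext k
  simp only [rankVec, Function.comp]
  apply Finset.card_bij (fun j _ => σ j)
  · intro a ha; simp at ha ⊢; exact ha
  · intro a _ b _ hab; exact σ.injective hab
  · intro b hb; exact ⟨σ.symm b, by simpa using hb, by simp⟩

lemma rankVec_of_injective {N : ℕ} {r : Fin N → ℝ} (hr : Function.Injective r) :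
    ∃ e : Equiv.Perm (Fin N), rankVec r = fun k => (e k : ℕ) + 1 := by
  set g : Fin N → ℕ := fun k => (Finset.univ.filter fun j => r j < r k).card with hg
  have hlt : ∀ k, g k < N := by
    intro k
    have : (Finset.univ.filter fun j => r j < r k) ⊆ Finset.univ.erase k := by
      intro j hj
      simp only [Finset.mem_filter] at hj
      exact Finset.mem_erase.2 ⟨fun h => by simp [h] at hj, Finset.mem_univ _⟩
    calc g k ≤ (Finset.univ.erase k).card := Finset.card_le_card this
    _ < Finset.univ.card := Finset.card_erase_lt_of_mem (Finset.mem_univ k)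
    _ = N := Finset.card_univ.trans (Fintype.card_fin N)
  have hmono : ∀ {a b : Fin N}, r a < r b → g a < g b := by
    intro a b hab
    have hsub : insert a (Finset.univ.filter fun j => r j < r a)
        ⊆ Finset.univ.filter fun j => r j < r b := by
      intro j hj
      rcases Finset.mem_insert.1 hj with h | h
      · subst h; simpa using hab
      · simp only [Finset.mem_filter] at h ⊢; exact ⟨h.1, h.2.trans hab⟩
    have hna : a ∉ Finset.univ.filter fun j => r j < r a := by simp
    calc g a < g a + 1 := Nat.lt_succ_self _
    _ = (insert a (Finset.univ.filter fun j => r j < r a)).card := by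
        rw [Finset.card_insert_of_notMem hna]
    _ ≤ g b := Finset.card_le_card hsub
  have hinj : Function.Injective (fun k => (⟨g k, hlt k⟩ : Fin N)) := by
    intro a b hab
    by_contra hne
    have : r a ≠ r b := fun h => hne (hr h)
    rcases this.lt_or_gt with h | h
    · exact absurd (congrArg Fin.val hab) (hmono h).ne
    · exact absurd (congrArg Fin.val hab).symm (hmono h).ne
  refine ⟨Equiv.ofBijective _ (Finite.injective_iff_bijective.1 hinj), ?_⟩
  funext k
  have : (Finset.univ.filter fun j => r j ≤ r k)
      = insert k (Finset.univ.filter fun j => r j < r k) := by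
    ext j
    simp only [Finset.mem_filter, Finset.mem_insert, Finset.mem_univ, true_and]
    constructor
    · intro h
      rcases h.lt_or_eq with h | h
      · exact Or.inr h
      · exact Or.inl (hr h)
    · rintro (rfl | h)
      · exact le_rfl
      · exact h.le
  rw [rankVec, this, Finset.card_insert_of_notMem (by simp)]
  rfl


lemma iIndep_reindex {Ω ι κ : Type*} [MeasurableSpace Ω] {μ : Measure Ω}
    {m : ι → MeasurableSpace Ω} (g : κ → ι) (hg : Function.Injective g)
    (h : iIndep m μ) : iIndep (fun k => m (g k)) μ := by
  classical
  rw [iIndep_iff]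
  intro S f' hf'
  set F' : ι → Set Ω := fun j => ⋂ i ∈ S.filter (fun i => g i = j), f' i with hF'
  have hfilter : ∀ i ∈ S, S.filter (fun i' => g i' = g i) = {i} := by
    intro i hi
    ext i'
    simp only [Finset.mem_filter, Finset.mem_singleton]
    exact ⟨fun h' => hg h'.2, fun h' => ⟨h' ▸ hi, h' ▸ rfl⟩⟩
  have hFg : ∀ i ∈ S, F' (g i) = f' i := by
    intro i hi
    show (⋂ i' ∈ S.filter (fun i' => g i' = g i), f' i') = f' i
    rw [hfilter i hi]
    simp
  have hiInter : ⋂ j ∈ S.image g, F' j = ⋂ i ∈ S, f' i := by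
    ext x
    simp only [Set.mem_iInter, Finset.mem_image, hF']
    constructor
    · intro hx i hi
      have := hx (g i) ⟨i, hi, rfl⟩
      simp only [Set.mem_iInter, Finset.mem_filter] at this
      exact this i ⟨hi, rfl⟩
    · rintro hx j ⟨i, hi, rfl⟩
      simp only [Set.mem_iInter, Finset.mem_filter]
      rintro i' ⟨hi', -⟩
      exact hx i' hi'
  have hmeas : ∀ j ∈ S.image g, MeasurableSet[m j] (F' j) := by
    rintro j hj
    rcases Finset.mem_image.1 hj with ⟨i, hi, rfl⟩
    rw [hFg i hi]
    exact hf' i hi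
  calc μ (⋂ i ∈ S, f' i) = μ (⋂ j ∈ S.image g, F' j) := by rw [hiInter]
  _ = ∏ j ∈ S.image g, μ (F' j) := h.meas_biInter hmeas
  _ = ∏ i ∈ S, μ (F' (g i)) := Finset.prod_image (fun a _ b _ hab => hg hab)
  _ = ∏ i ∈ S, μ (f' i) := Finset.prod_congr rfl fun i hi => by rw [hFg i hi]

noncomputable def iterW {𝓧 : Type*} {p K : ℕ}
    (F : EuclideanSpace ℝ (Fin p) → 𝓧 → EuclideanSpace ℝ (Fin p))
    (e : EuclideanSpace ℝ (Fin p)) (v : ℕ → Fin K → 𝓧) : ℕ → EuclideanSpace ℝ (Fin p)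
  | 0 => e
  | n + 1 => (K : ℝ)⁻¹ • ∑ k : Fin K, F (iterW F e v n) (v n k)

lemma measurable_iterW {𝓧 : Type*} [MeasurableSpace 𝓧] {p K : ℕ}
    (F : EuclideanSpace ℝ (Fin p) → 𝓧 → EuclideanSpace ℝ (Fin p))
    (hF : Measurable (Function.uncurry F)) (n : ℕ) :
    Measurable (fun x : EuclideanSpace ℝ (Fin p) × (ℕ → Fin K → 𝓧) =>
      iterW F x.1 x.2 n) := by
  induction n with
  | zero => exact measurable_fst
  | succ n ih =>
      refine Measurable.fun_const_smul ?_ _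
      refine Finset.measurable_sum _ fun k _ => ?_
      have hv : Measurable (fun x : EuclideanSpace ℝ (Fin p) × (ℕ → Fin K → 𝓧) =>
          x.2 n k) :=
        (measurable_pi_apply k).comp ((measurable_pi_apply n).comp measurable_snd)
      exact hF.comp (ih.prodMk hv)


lemma continuous_resid {p q : ℕ} (B : Matrix (Fin p) (Fin q) ℝ) :
    Continuous (resid B) := by
  unfold resid
  apply Continuous.norm
  apply Continuous.sub continuous_id
  refine (PiLp.continuous_toLp 2 (fun _ : Fin p => ℝ)).comp ?_
  have h1 : Continuous (B.mulVec : (Fin q → ℝ) → (Fin p → ℝ)) :=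
    LinearMap.continuous_of_finiteDimensional B.mulVecLin
  have h2 : Continuous (Bᵀ.mulVec : (Fin p → ℝ) → (Fin q → ℝ)) :=
    LinearMap.continuous_of_finiteDimensional Bᵀ.mulVecLin
  exact (h1.comp h2).comp (PiLp.continuous_ofLp 2 (fun _ : Fin p => ℝ))

section Helpers
variable {𝓧 : Type*} [MeasurableSpace 𝓧] {p q K s : ℕ}

noncomputable def phiMap (B : Matrix (Fin p) (Fin q) ℝ)
    (F : EuclideanSpace ℝ (Fin p) → 𝓧 → EuclideanSpace ℝ (Fin p))
    (u : EuclideanSpace ℝ (Fin p) × (Fin K → 𝓧)) : Fin K → ℕ :=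
  rankVec fun k => resid B (F u.1 (u.2 k) - u.1)

lemma measurable_phiMap (B : Matrix (Fin p) (Fin q) ℝ)
    (F : EuclideanSpace ℝ (Fin p) → 𝓧 → EuclideanSpace ℝ (Fin p))
    (hF : Measurable (Function.uncurry F)) :
    Measurable (phiMap (K := K) B F) := by
  apply measurable_rankVec.comp
  apply measurable_pi_lambda
  intro k
  exact (continuous_resid B).measurable.comp
    ((hF.comp (measurable_fst.prodMk ((measurable_pi_apply k).comp measurable_snd))).sub
      measurable_fst)

lemma phiMap_perm (B : Matrix (Fin p) (Fin q) ℝ)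
    (F : EuclideanSpace ℝ (Fin p) → 𝓧 → EuclideanSpace ℝ (Fin p))
    (u : EuclideanSpace ℝ (Fin p) × (Fin K → 𝓧)) (σ : Equiv.Perm (Fin K)) :
    phiMap B F (u.1, u.2 ∘ σ) = phiMap B F u ∘ σ := by
  have : (fun k => resid B (F u.1 ((u.2 ∘ σ) k) - u.1))
      = (fun k => resid B (F u.1 (u.2 k) - u.1)) ∘ σ := rfl
  rw [phiMap, this, rankVec_comp_perm_s9]
  rfl

noncomputable def gMap (F : EuclideanSpace ℝ (Fin p) → 𝓧 → EuclideanSpace ℝ (Fin p))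
    (u : EuclideanSpace ℝ (Fin p) × (Fin K → 𝓧)) : EuclideanSpace ℝ (Fin p) :=
  (K : ℝ)⁻¹ • ∑ k : Fin K, F u.1 (u.2 k)

lemma measurable_gMap (F : EuclideanSpace ℝ (Fin p) → 𝓧 → EuclideanSpace ℝ (Fin p))
    (hF : Measurable (Function.uncurry F)) :
    Measurable (gMap (K := K) F) := by
  refine Measurable.fun_const_smul ?_ _
  exact Finset.measurable_sum _ fun k _ =>
    hF.comp (measurable_fst.prodMk ((measurable_pi_apply k).comp measurable_snd))

lemma gMap_perm (F : EuclideanSpace ℝ (Fin p) → 𝓧 → EuclideanSpace ℝ (Fin p))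
    (u : EuclideanSpace ℝ (Fin p) × (Fin K → 𝓧)) (σ : Equiv.Perm (Fin K)) :
    gMap F (u.1, u.2 ∘ σ) = gMap F u := by
  simp only [gMap]
  congr 1
  exact Equiv.sum_comp σ fun k => F u.1 (u.2 k)

noncomputable def vExt [NeZero s] (v : Fin s → Fin K → 𝓧) : ℕ → Fin K → 𝓧 :=
  fun n => v ⟨n % s, Nat.mod_lt n (NeZero.pos s)⟩

lemma vExt_lt [NeZero s] (v : Fin s → Fin K → 𝓧) {n : ℕ} (hn : n < s) :
    vExt v n = v ⟨n, hn⟩ := by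
  simp only [vExt]
  congr 1
  simp [Nat.mod_eq_of_lt hn]

lemma measurable_vExt [NeZero s] :
    Measurable (vExt : (Fin s → Fin K → 𝓧) → ℕ → Fin K → 𝓧) :=
  measurable_pi_lambda _ fun n => measurable_pi_apply _

noncomputable def psiMap [NeZero s] (B : Matrix (Fin p) (Fin q) ℝ)
    (F : EuclideanSpace ℝ (Fin p) → 𝓧 → EuclideanSpace ℝ (Fin p))
    (x : EuclideanSpace ℝ (Fin p) × (Fin s → Fin K → 𝓧)) : Fin s → Fin K → ℕ :=
  fun j => rankVec fun k =>
    resid B (F (iterW F x.1 (vExt x.2) j.val) (x.2 j k) - iterW F x.1 (vExt x.2) j.val)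

lemma measurable_psiMap [NeZero s] (B : Matrix (Fin p) (Fin q) ℝ)
    (F : EuclideanSpace ℝ (Fin p) → 𝓧 → EuclideanSpace ℝ (Fin p))
    (hF : Measurable (Function.uncurry F)) :
    Measurable (psiMap (K := K) (s := s) B F) := by
  apply measurable_pi_lambda
  intro j
  apply measurable_rankVec.comp
  apply measurable_pi_lambda
  intro k
  have hiter : Measurable (fun x : EuclideanSpace ℝ (Fin p) × (Fin s → Fin K → 𝓧) =>
      iterW F x.1 (vExt x.2) j.val) :=
    (measurable_iterW F hF j.val).comp
      (measurable_fst.prodMk (measurable_vExt.comp measurable_snd))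
  have hx : Measurable (fun x : EuclideanSpace ℝ (Fin p) × (Fin s → Fin K → 𝓧) =>
      x.2 j k) :=
    (measurable_pi_apply k).comp ((measurable_pi_apply j).comp measurable_snd)
  exact (continuous_resid B).measurable.comp ((hF.comp (hiter.prodMk hx)).sub hiter)

end Helpers

lemma indepFun_of_perm_invariant {Ω β : Type*} [MeasurableSpace Ω] [MeasurableSpace β]
    {P : Measure Ω} [IsProbabilityMeasure P] {K : ℕ}
    {R : Ω → Fin K → ℕ} {Y : Ω → β}
    (hR : Measurable R) (hY : Measurable Y)
    (hinv : ∀ (σ : Equiv.Perm (Fin K)) (π : Fin K → ℕ) (Bs : Set β), MeasurableSet Bs →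
      P (R ⁻¹' {π ∘ ⇑σ} ∩ Y ⁻¹' Bs) = P (R ⁻¹' {π} ∩ Y ⁻¹' Bs))
    (hae : ∀ᵐ ω ∂P, ∃ e : Equiv.Perm (Fin K), R ω = fun k => (e k : ℕ) + 1) :
    IndepFun R Y P := by
  classical
  set lab : Equiv.Perm (Fin K) → (Fin K → ℕ) := fun e k => (e k : ℕ) + 1 with hlab
  have hlabinj : Function.Injective lab := by
    intro e e' h
    exact Equiv.ext fun k => Fin.val_injective (Nat.add_right_cancel (congrFun h k))
  have hdecomp : ∀ (A : Set (Fin K → ℕ)) (Bs : Set β), MeasurableSet Bs →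
      P (R ⁻¹' A ∩ Y ⁻¹' Bs)
        = (Finset.univ.filter fun e : Equiv.Perm (Fin K) => lab e ∈ A).card
            • P (R ⁻¹' {lab 1} ∩ Y ⁻¹' Bs) := by
    intro A Bs hBs
    have hconst : ∀ e : Equiv.Perm (Fin K),
        P (R ⁻¹' {lab e} ∩ Y ⁻¹' Bs) = P (R ⁻¹' {lab 1} ∩ Y ⁻¹' Bs) := by
      intro e
      have h1 : lab 1 ∘ ⇑e = lab e := by funext k; simp [hlab]
      rw [← h1]
      exact hinv e (lab 1) Bs hBs
    have hcong : (R ⁻¹' A ∩ Y ⁻¹' Bs : Set Ω)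
        =ᵐ[P] ((⋃ e ∈ (Finset.univ.filter fun e : Equiv.Perm (Fin K) => lab e ∈ A),
            (R ⁻¹' {lab e} ∩ Y ⁻¹' Bs)) : Set Ω) := by
      rw [Filter.eventuallyEq_set]
      filter_upwards [hae] with ω hω
      constructor
      · rintro ⟨hA, hB⟩
        obtain ⟨e, he⟩ := hω
        refine Set.mem_iUnion₂.2 ⟨e, ?_, ?_, hB⟩
        · exact Finset.mem_filter.2 ⟨Finset.mem_univ _, by rw [show lab e = R ω from he.symm]; exact hA⟩
        · exact Set.mem_singleton_iff.2 he
      · intro hx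
        obtain ⟨e, hmem, hre, hB⟩ := Set.mem_iUnion₂.1 hx
        refine ⟨?_, hB⟩
        have : R ω = lab e := hre
        rw [Set.mem_preimage, this]
        exact (Finset.mem_filter.1 hmem).2
    rw [measure_congr hcong]
    rw [measure_biUnion_finset ?hd ?hm]
    · rw [Finset.sum_congr rfl (fun e _ => hconst e), Finset.sum_const]
    case hd =>
      intro e _ e' _ hne
      refine Set.disjoint_left.2 fun ω hω hω' => hne ?_
      have h1 : R ω = lab e := hω.1
      have h2 : R ω = lab e' := hω'.1
      exact hlabinj (h1 ▸ h2)
    case hm =>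
      intro e _
      exact (hR (measurableSet_singleton _)).inter (hY hBs)
  rw [indepFun_iff_measure_inter_preimage_eq_mul]
  intro A Bs hA hBs
  have h1 := hdecomp A Bs hBs
  have h2 := hdecomp A Set.univ MeasurableSet.univ
  have h3 := hdecomp Set.univ Bs hBs
  have h4 := hdecomp Set.univ Set.univ MeasurableSet.univ
  simp only [Set.preimage_univ, Set.inter_univ, Set.univ_inter, Set.mem_univ,
    Finset.filter_true, measure_univ] at h2 h3 h4
  rw [h1, h2, h3]
  have h4' : ((Finset.univ : Finset (Equiv.Perm (Fin K))).card : ℝ≥0∞)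
      * P (R ⁻¹' {lab 1}) = 1 := by
    rw [nsmul_eq_mul] at h4; exact h4.symm
  simp only [nsmul_eq_mul]
  calc ((Finset.univ.filter fun e : Equiv.Perm (Fin K) => lab e ∈ A).card : ℝ≥0∞)
        * P (R ⁻¹' {lab 1} ∩ Y ⁻¹' Bs)
      = ((Finset.univ.filter fun e : Equiv.Perm (Fin K) => lab e ∈ A).card : ℝ≥0∞)
        * ((((Finset.univ : Finset (Equiv.Perm (Fin K))).card : ℝ≥0∞) * P (R ⁻¹' {lab 1}))
          * P (R ⁻¹' {lab 1} ∩ Y ⁻¹' Bs)) := by rw [h4', one_mul]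
    _ = _ := by ring

/-- For every `t` and every `s ≥ 1` with `t + s ≤ T`, the rank vector `R_t` is
independent of the tuple of subsequent rank vectors `(R_{t+1},…,R_{t+s})`. -/
theorem rank_vector_indep_future_ranks
    {Ω : Type*} [MeasurableSpace Ω] (P : Measure Ω) [IsProbabilityMeasure P]
    {𝓧 : Type*} [MeasurableSpace 𝓧]
    (T K p q : ℕ) (hK : 1 ≤ K) (hp : 1 ≤ p)
    (D : Fin T → Fin K → Ω → 𝓧) (hD : ∀ t k, Measurable (D t k))
    (w : ℕ → Ω → EuclideanSpace ℝ (Fin p)) (hw0 : Measurable (w 0))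
    (F : EuclideanSpace ℝ (Fin p) → 𝓧 → EuclideanSpace ℝ (Fin p))
    (hF : Measurable (Function.uncurry F))
    -- the recursion w_{t+1} = (1/K) Σ_k F(w_t, D_{t,k})
    (hrec : ∀ t : Fin T, w (t.val + 1)
      = fun ω => (K : ℝ)⁻¹ • ∑ k : Fin K, F (w t.val ω) (D t k ω))
    -- the family {D_{t,k}} together with w₁ is an independent family
    (hIndep : iIndep (fun i : Option (Fin T × Fin K) =>
      i.elim (MeasurableSpace.comap (w 0) inferInstance)
        fun tk => MeasurableSpace.comap (D tk.1 tk.2) inferInstance) P)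
    -- the D_{t,k} are identically distributed
    (hId : ∀ (t t' : Fin T) (k k' : Fin K), IdentDistrib (D t k) (D t' k') P P)
    (B : Matrix (Fin p) (Fin q) ℝ)
    -- almost surely, for every t, the residuals r_t^(1),…,r_t^(K) are pairwise distinct
    (hdist : ∀ᵐ ω ∂P, ∀ t : Fin T,
      Function.Injective fun k : Fin K => resid B (F (w t.val ω) (D t k ω) - w t.val ω)) :
    ∀ (t : Fin T) (s : ℕ), 1 ≤ s → (hts : t.val + s < T) →
      IndepFun (fun ω => rankVec fun k => resid B (F (w t.val ω) (D t k ω) - w t.val ω))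
        (fun ω => fun j : Fin s =>
          rankVec fun k => resid B
            (F (w (t.val + 1 + j.val) ω)
                (D ⟨t.val + 1 + j.val, by have := j.isLt; omega⟩ k ω)
              - w (t.val + 1 + j.val) ω)) P := by
  classical
  intro t s hs hts
  haveI : NeZero s := ⟨by omega⟩
  set m : Option (Fin T × Fin K) → MeasurableSpace Ω := fun i =>
    i.elim (MeasurableSpace.comap (w 0) inferInstance)
      fun tk => MeasurableSpace.comap (D tk.1 tk.2) inferInstance with hm_def
  have hIndep' : iIndep m P := hIndep
  -- identical distribution
  set μ0 : Measure 𝓧 := P.map (D t ⟨0, hK⟩) with hμ0_def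
  haveI : IsProbabilityMeasure μ0 := Measure.isProbabilityMeasure_map (hD t ⟨0, hK⟩).aemeasurable
  have hμ0 : ∀ (a : Fin T) (b : Fin K), P.map (D a b) = μ0 := fun a b =>
    (hId a t b ⟨0, hK⟩).map_eq
  -- basic random elements
  set idx : Fin s → Fin T := fun j => ⟨t.val + 1 + j.val, by have := j.isLt; omega⟩ with hidx_def
  set U : Ω → EuclideanSpace ℝ (Fin p) := w t.val with hU_def
  set X : Ω → Fin K → 𝓧 := fun ω k => D t k ω with hX_def
  set V : Ω → Fin s → Fin K → 𝓧 := fun ω j k => D (idx j) k ω with hV_def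
  have hXmeas : Measurable X := measurable_pi_lambda _ fun k => hD t k
  have hVmeas : Measurable V := measurable_pi_lambda _ fun j =>
    measurable_pi_lambda _ fun k => hD (idx j) k
  -- the past / future index sets
  set Spast : Set (Option (Fin T × Fin K)) :=
    {o | o = none ∨ ∃ r : Fin T, ∃ c : Fin K, o = some (r, c) ∧ r.val < t.val} with hSpast_def
  set Sfut : Set (Option (Fin T × Fin K)) :=
    {o | ∃ r : Fin T, ∃ c : Fin K, o = some (r, c) ∧ t.val ≤ r.val} with hSfut_def
  have hm_le : ∀ i, m i ≤ (inferInstance : MeasurableSpace Ω) := by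
    intro i
    match i with
    | none => exact hw0.comap_le
    | some tk => exact (hD tk.1 tk.2).comap_le
  have hdisj : Disjoint Spast Sfut := by
    rw [Set.disjoint_left]
    rintro o ho hof
    obtain ⟨r, c, rfl, hr⟩ := hof
    rcases ho with h | ⟨r', c', he, hr'⟩
    · exact nomatch h
    · simp only [Option.some.injEq, Prod.mk.injEq] at he
      obtain ⟨rfl, -⟩ := he
      omega
  have hIndepPF : Indep (⨆ i ∈ Spast, m i) (⨆ i ∈ Sfut, m i) P :=
    indep_iSup_of_disjoint hm_le hIndep' hdisj
  -- w is past-measurable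
  have hwPast : ∀ n, n ≤ t.val → Measurable[⨆ i ∈ Spast, m i] (w n) := by
    intro n
    induction n with
    | zero =>
      intro _
      have h0 : Measurable[m none] (w 0) := fun _s hs' => ⟨_, hs', rfl⟩
      exact h0.mono (le_biSup m (show none ∈ Spast from Or.inl rfl)) le_rfl
    | succ n ih =>
      intro hn
      have hnT : n < T := by omega
      rw [hrec ⟨n, hnT⟩]
      refine Measurable.fun_const_smul ?_ _
      refine Finset.measurable_sum _ fun k _ => ?_
      have hDk : Measurable[m (some (⟨n, hnT⟩, k))] (D ⟨n, hnT⟩ k) :=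
        fun _s hs' => ⟨_, hs', rfl⟩
      exact hF.comp ((ih (by omega)).prodMk
        (hDk.mono (le_biSup m
          (show some (⟨n, hnT⟩, k) ∈ Spast from
            Or.inr ⟨⟨n, hnT⟩, k, rfl, show n < t.val by omega⟩)) le_rfl))
  have hsup_le_past : (⨆ i ∈ Spast, m i) ≤ (inferInstance : MeasurableSpace Ω) :=
    iSup_le fun i => iSup_le fun _ => hm_le i
  have hsup_le_fut : (⨆ i ∈ Sfut, m i) ≤ (inferInstance : MeasurableSpace Ω) :=
    iSup_le fun i => iSup_le fun _ => hm_le i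
  have hUmeas : Measurable U := (hwPast t.val le_rfl).mono hsup_le_past le_rfl
  -- the tuple of round-≥t data
  set hfun : Equiv.Perm (Fin K) → (Fin K ⊕ Fin s × Fin K) → Ω → 𝓧 :=
    fun σ => Sum.elim (fun k => D t (σ k)) (fun jk => D (idx jk.1) jk.2) with hfun_def
  have hfun_meas : ∀ σ i, Measurable (hfun σ i) := by
    rintro σ (k | jk)
    · exact hD t (σ k)
    · exact hD (idx jk.1) jk.2
  set ι' : Equiv.Perm (Fin K) → (Fin K ⊕ Fin s × Fin K) → Option (Fin T × Fin K) :=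
    fun σ => Sum.elim (fun k => some (t, σ k)) (fun jk => some (idx jk.1, jk.2)) with hι'_def
  have hidxval : ∀ j : Fin s, (idx j).val = t.val + 1 + j.val := fun j => rfl
  have hι'inj : ∀ σ, Function.Injective (ι' σ) := by
    intro σ
    rintro (k | ⟨j, c⟩) (k' | ⟨j', c'⟩) h <;>
      simp only [hι'_def, Sum.elim_inl, Sum.elim_inr, Option.some.injEq, Prod.mk.injEq] at h
    · rw [σ.injective h.2]
    · have := congrArg Fin.val h.1
      rw [hidxval] at this
      omega
    · have := congrArg Fin.val h.1
      rw [hidxval] at this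
      omega
    · have h1 := congrArg Fin.val h.1
      rw [hidxval, hidxval] at h1
      have : j = j' := Fin.ext (by omega)
      subst this
      rw [h.2]
  have hcomap : ∀ σ, (fun i : Fin K ⊕ Fin s × Fin K =>
      MeasurableSpace.comap (hfun σ i) inferInstance) = fun i => m (ι' σ i) := by
    intro σ
    funext i
    cases i <;> rfl
  have hiIσ : ∀ σ, iIndep (fun i : Fin K ⊕ Fin s × Fin K =>
      MeasurableSpace.comap (hfun σ i) inferInstance) P := by
    intro σ
    have h := iIndep_reindex (ι' σ) (hι'inj σ) hIndep'
    rwa [← hcomap σ] at h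
  set tup : Equiv.Perm (Fin K) → Ω → (Fin K ⊕ Fin s × Fin K → 𝓧) :=
    fun σ ω i => hfun σ i ω with htup_def
  have htup_meas : ∀ σ, Measurable (tup σ) := fun σ =>
    measurable_pi_lambda _ (hfun_meas σ)
  have hpi : ∀ σ, P.map (tup σ) = Measure.pi (fun _ : Fin K ⊕ Fin s × Fin K => μ0) := by
    intro σ
    refine (Measure.pi_eq fun Bs hBs => ?_).symm
    rw [Measure.map_apply (htup_meas σ) (MeasurableSet.univ_pi hBs)]
    have hpre : tup σ ⁻¹' (Set.univ.pi Bs) = ⋂ i, hfun σ i ⁻¹' Bs i := by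
      ext ω
      simp [htup_def, Set.mem_pi]
    rw [hpre, (hiIσ σ).meas_iInter (fun i => ⟨Bs i, hBs i, rfl⟩)]
    refine Finset.prod_congr rfl fun i _ => ?_
    rw [← Measure.map_apply (hfun_meas σ i) (hBs i)]
    congr 1
    match i with
    | Sum.inl k => exact hμ0 t (σ k)
    | Sum.inr jk => exact hμ0 (idx jk.1) jk.2
  -- package into W
  set G : (Fin K ⊕ Fin s × Fin K → 𝓧) → (Fin K → 𝓧) × (Fin s → Fin K → 𝓧) :=
    fun y => (fun k => y (Sum.inl k), fun j k => y (Sum.inr (j, k))) with hG_def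
  have hGmeas : Measurable G :=
    (measurable_pi_lambda _ fun k => measurable_pi_apply _).prodMk
      (measurable_pi_lambda _ fun j => measurable_pi_lambda _ fun k => measurable_pi_apply _)
  set Wfun : Equiv.Perm (Fin K) → Ω → (Fin K → 𝓧) × (Fin s → Fin K → 𝓧) :=
    fun σ => G ∘ (tup σ) with hW_def
  have hWmeas : ∀ σ, Measurable (Wfun σ) := fun σ => hGmeas.comp (htup_meas σ)
  have hWlaw : ∀ σ, P.map (Wfun σ)
      = (Measure.pi (fun _ : Fin K ⊕ Fin s × Fin K => μ0)).map G := by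
    intro σ
    rw [show Wfun σ = G ∘ tup σ from rfl, ← Measure.map_map hGmeas (htup_meas σ), hpi σ]
  have hWfut : ∀ σ, Measurable[⨆ i ∈ Sfut, m i] (Wfun σ) := by
    intro σ
    have htupfut : Measurable[⨆ i ∈ Sfut, m i] (tup σ) := by
      refine @measurable_pi_lambda Ω (Fin K ⊕ Fin s × Fin K) (fun _ => 𝓧)
        (⨆ i ∈ Sfut, m i) (fun _ => inferInstance) (tup σ) ?_
      rintro (k | jk)
      · have h1 : Measurable[m (some (t, σ k))] (D t (σ k)) := fun _s hs' => ⟨_, hs', rfl⟩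
        exact h1.mono (le_biSup m (show some (t, σ k) ∈ Sfut from ⟨t, σ k, rfl, le_rfl⟩)) le_rfl
      · have h1 : Measurable[m (some (idx jk.1, jk.2))] (D (idx jk.1) jk.2) :=
          fun _s hs' => ⟨_, hs', rfl⟩
        exact h1.mono (le_biSup m (show some (idx jk.1, jk.2) ∈ Sfut from
          ⟨idx jk.1, jk.2, rfl, show t.val ≤ t.val + 1 + jk.1.val by omega⟩)) le_rfl
    exact hGmeas.comp htupfut
  have hUW : ∀ σ, IndepFun U (Wfun σ) P := by
    intro σ
    rw [IndepFun_iff_Indep]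
    exact indep_of_indep_of_le_left
      (indep_of_indep_of_le_right hIndepPF (measurable_iff_comap_le.1 (hWfut σ)))
      (measurable_iff_comap_le.1 (hwPast t.val le_rfl))
  -- the joint law of (U, W σ) does not depend on σ
  set Θ : Equiv.Perm (Fin K) → Ω →
      EuclideanSpace ℝ (Fin p) × ((Fin K → 𝓧) × (Fin s → Fin K → 𝓧)) :=
    fun σ ω => (U ω, Wfun σ ω) with hΘ_def
  have hΘmeas : ∀ σ, Measurable (Θ σ) := fun σ => hUmeas.prodMk (hWmeas σ)
  have hΘlaw : ∀ σ, P.map (Θ σ) = (P.map U).prod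
      ((Measure.pi (fun _ : Fin K ⊕ Fin s × Fin K => μ0)).map G) := by
    intro σ
    rw [← hWlaw σ]
    exact (indepFun_iff_map_prod_eq_prod_map_map hUmeas.aemeasurable
      (hWmeas σ).aemeasurable).1 (hUW σ)
  -- the two random objects in the statement
  set R : Ω → Fin K → ℕ := fun ω => phiMap B F (U ω, X ω) with hR_def
  set Yf : Ω → Fin s → Fin K → ℕ :=
    fun ω => psiMap B F (gMap F (U ω, X ω), V ω) with hYf_def
  have hRmeas : Measurable R :=
    (measurable_phiMap B F hF).comp (hUmeas.prodMk hXmeas)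
  have hYfmeas : Measurable Yf :=
    (measurable_psiMap B F hF).comp
      (((measurable_gMap F hF).comp (hUmeas.prodMk hXmeas)).prodMk hVmeas)
  -- permutation invariance
  have hinv : ∀ (σ : Equiv.Perm (Fin K)) (π : Fin K → ℕ)
      (Bs : Set (Fin s → Fin K → ℕ)), MeasurableSet Bs →
      P (R ⁻¹' {π ∘ ⇑σ} ∩ Yf ⁻¹' Bs) = P (R ⁻¹' {π} ∩ Yf ⁻¹' Bs) := by
    intro σ π Bs hBs
    set C : Set (EuclideanSpace ℝ (Fin p) × ((Fin K → 𝓧) × (Fin s → Fin K → 𝓧))) :=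
      (fun γ : EuclideanSpace ℝ (Fin p) × ((Fin K → 𝓧) × (Fin s → Fin K → 𝓧)) =>
        (phiMap B F (γ.1, γ.2.1), psiMap B F (gMap F (γ.1, γ.2.1), γ.2.2)))
        ⁻¹' ({π} ×ˢ Bs) with hC_def
    have hproj : Measurable (fun γ : EuclideanSpace ℝ (Fin p) ×
        ((Fin K → 𝓧) × (Fin s → Fin K → 𝓧)) =>
        (phiMap B F (γ.1, γ.2.1), psiMap B F (gMap F (γ.1, γ.2.1), γ.2.2))) :=
      ((measurable_phiMap B F hF).comp
          (measurable_fst.prodMk (measurable_fst.comp measurable_snd))).prodMk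
        ((measurable_psiMap B F hF).comp
          (((measurable_gMap F hF).comp
              (measurable_fst.prodMk (measurable_fst.comp measurable_snd))).prodMk
            (measurable_snd.comp measurable_snd)))
    have hCmeas : MeasurableSet C := hproj ((measurableSet_singleton π).prod hBs)
    have hPC : ∀ σ' : Equiv.Perm (Fin K), P (Θ σ' ⁻¹' C) = P (Θ 1 ⁻¹' C) := by
      intro σ'
      rw [← Measure.map_apply (hΘmeas σ') hCmeas, ← Measure.map_apply (hΘmeas 1) hCmeas,
        hΘlaw σ', hΘlaw 1]
    have hcompiff : ∀ (f πf : Fin K → ℕ) (τ : Equiv.Perm (Fin K)),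
        f ∘ ⇑τ = πf ↔ f = πf ∘ ⇑τ⁻¹ := by
      intro f πf τ
      constructor
      · intro h; rw [← h]; funext x; simp
      · intro h; rw [h]; funext x; simp
    have hpre : ∀ σ' : Equiv.Perm (Fin K),
        Θ σ' ⁻¹' C = R ⁻¹' {π ∘ ⇑σ'⁻¹} ∩ Yf ⁻¹' Bs := by
      intro σ'
      ext ω
      have h1 : phiMap B F (U ω, X ω ∘ ⇑σ') = phiMap B F (U ω, X ω) ∘ ⇑σ' :=
        phiMap_perm B F (U ω, X ω) σ'
      have h2 : gMap F (U ω, X ω ∘ ⇑σ') = gMap F (U ω, X ω) :=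
        gMap_perm F (U ω, X ω) σ'
      have hiff : (phiMap B F (U ω, X ω) ∘ ⇑σ' = π)
          ↔ (phiMap B F (U ω, X ω) = π ∘ ⇑σ'⁻¹) := hcompiff _ _ _
      show (phiMap B F (U ω, X ω ∘ ⇑σ') = π
          ∧ psiMap B F (gMap F (U ω, X ω ∘ ⇑σ'), V ω) ∈ Bs)
        ↔ (phiMap B F (U ω, X ω) = π ∘ ⇑σ'⁻¹
          ∧ psiMap B F (gMap F (U ω, X ω), V ω) ∈ Bs)
      rw [h1, h2, hiff]
    have e1 := hPC σ⁻¹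
    rw [hpre σ⁻¹, hpre 1] at e1
    rw [inv_inv] at e1
    have hone : π ∘ ⇑((1 : Equiv.Perm (Fin K))⁻¹) = π := by
      funext x; simp
    rw [hone] at e1
    exact e1
  -- almost sure permutation property
  have haeR : ∀ᵐ ω ∂P, ∃ e : Equiv.Perm (Fin K), R ω = fun k => (e k : ℕ) + 1 :=
    hdist.mono fun ω h => rankVec_of_injective (h t)
  have key : IndepFun R Yf P := indepFun_of_perm_invariant hRmeas hYfmeas hinv haeR
  -- identify Yf with the function in the statement
  have hit : ∀ (ω : Ω) (n : ℕ), n < s → w (t.val + 1 + n) ω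
      = iterW F (gMap F (U ω, X ω)) (vExt (V ω)) n := by
    intro ω n
    induction n with
    | zero =>
      intro _
      show w (t.val + 1) ω = _
      rw [hrec t]
      rfl
    | succ n ih =>
      intro hn
      have hnT : t.val + 1 + n < T := by omega
      have heq' : w (t.val + 1 + n + 1) = fun ω => (K : ℝ)⁻¹ •
          ∑ k : Fin K, F (w (t.val + 1 + n) ω) (D ⟨t.val + 1 + n, hnT⟩ k ω) :=
        hrec ⟨t.val + 1 + n, hnT⟩
      show w (t.val + 1 + n + 1) ω = _
      rw [heq']
      show (K : ℝ)⁻¹ • ∑ k : Fin K, F (w (t.val + 1 + n) ω) (D ⟨t.val + 1 + n, hnT⟩ k ω)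
        = (K : ℝ)⁻¹ • ∑ k : Fin K,
            F (iterW F (gMap F (U ω, X ω)) (vExt (V ω)) n) (vExt (V ω) n k)
      rw [← ih (by omega)]
      congr 1
      refine Finset.sum_congr rfl fun k _ => ?_
      congr 1
      rw [vExt_lt (V ω) (show n < s by omega)]
  have hYeq : (fun ω => fun j : Fin s =>
      rankVec fun k => resid B
        (F (w (t.val + 1 + j.val) ω)
            (D ⟨t.val + 1 + j.val, by have := j.isLt; omega⟩ k ω)
          - w (t.val + 1 + j.val) ω)) = Yf := by
    funext ω j
    show (rankVec fun k => resid B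
        (F (w (t.val + 1 + j.val) ω) (D (idx j) k ω) - w (t.val + 1 + j.val) ω)) = Yf ω j
    rw [hit ω j.val j.isLt]
    rfl
  rw [← hYeq] at key
  exact key
end
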